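/- arXiv:2103.14609 — 3 statements merged into one kernel-verified Lean document; each statement's English description precedes it below -/
import Mathlib

section
/- If φ: ℚ≥1 → ℚ≥1 satisfies q - φ(q) ∈ ℕ and 1 ≤ φ(q) for all q, and t, v are nonempty words of equal length with v^q = (t^q)^R for some rational q ≥ 1 (where w^q denotes the q-power of w), then v^{φ(q)} = (t^{φ(q)})^R. -/
/-!
Write `q = k + φ(q)` with `k ∈ ℕ`. Every `q`-power splits as `u^q = u^k u^(φ(q))`, and `u^(φ(q))`
is also a prefix of `u^q`. So `v^(φ(q))` is the prefix of `v^q = (t^(φ(q)))^R (t^k)^R` of length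
`|v^(φ(q))| = |t^(φ(q))|`, that is, `(t^(φ(q)))^R`.
-/

open scoped BigOperators

variable {α : Type*}

/-- The factor of the infinite word `w` (1-indexed) from position `i` to position `j`. -/
def Subword (w : ℕ → α) (i j : ℕ) : List α :=
  (List.range (j + 1 - i)).map fun n => w (i + n)

/-- `t` is a finite factor of the infinite word `w` (positions are 1-indexed). -/
def IsFactorI (w : ℕ → α) (t : List α) : Prop :=
  ∃ i, 1 ≤ i ∧ t = (List.range t.length).map fun n => w (i + n)

/-- `t` occurs infinitely often in the infinite word `w`. -/
def RecurrentI (w : ℕ → α) (t : List α) : Prop :=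
  ∀ N, ∃ i, N ≤ i ∧ t = (List.range t.length).map fun n => w (i + n)

/-- The infinite word `w` is ultimately periodic. -/
def UltimatelyPeriodic (w : ℕ → α) : Prop :=
  ∃ p N, 1 ≤ p ∧ ∀ n, N ≤ n → w (n + p) = w n

/-- The `q`-power `u^q` of a finite word `u`, for a rational exponent `q ≥ 1`:
`u^⌊q⌋` followed by the prefix of `u` of length `(q - ⌊q⌋)·|u|`. -/
def fracPow (u : List α) (q : ℚ) : List α :=
  (List.replicate ⌊q⌋.toNat u).flatten ++
    u.take (⌊q * (u.length : ℚ)⌋.toNat - ⌊q⌋.toNat * u.length)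

/-- A nonempty word is primitive if it is not a (possibly fractional) `q`-power,
`q ≥ 2`, of any word. -/
def Primitive (v : List α) : Prop :=
  v ≠ [] ∧ ∀ (t : List α) (q : ℚ), 2 ≤ q → v ≠ fracPow t q

/-- `PowFactor u`: finite factors of `u^∞` together with finite factors of `(u^R)^∞`. -/
def IsPowFactor (u t : List α) : Prop :=
  (∃ k, t <:+: (List.replicate k u).flatten) ∨ (∃ k, t <:+: (List.replicate k u.reverse).flatten)

/-- `(i,j)` is a `u`-run of the infinite word `w` (with the fixed parameter `γ`). -/
def IsRun (γ : ℕ) (w : ℕ → α) (u : List α) (i j : ℕ) : Prop :=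
  i < j ∧ (γ - 2) * u.length ≤ j - i + 1 ∧ u.length + 1 < i ∧
  IsPowFactor u (Subword w (i - u.length) (j + u.length)) ∧
  ¬ IsPowFactor u (Subword w (i - u.length - 1) (j + u.length)) ∧
  ¬ IsPowFactor u (Subword w (i - u.length) (j + u.length + 1))

/-- Membership in the set `Π_γ(w)`. -/
def InPi (γ : ℕ) (w : ℕ → α) (u : List α) : Prop :=
  Primitive u ∧ IsFactorI w u ∧
  ¬ IsPowFactor u ((List.range (γ * u.length)).map fun n => w (1 + n)) ∧
  ∃ v : List α, v.length = u.length ∧ IsPowFactor u v ∧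
    RecurrentI w ((List.replicate γ v).flatten)

/-- Palindromic length: the minimal number of nonempty palindromes whose
concatenation equals `v`. -/
noncomputable def PL (v : List α) : ℕ :=
  sInf {k | ∃ ps : List (List α), ps.flatten = v ∧ ps.length = k ∧
    ∀ p ∈ ps, p ≠ [] ∧ p.reverse = p}

/-- `maxPL v`: the maximum of `PL` over the factors of `v`. -/
noncomputable def maxPL (v : List α) : ℕ :=
  sSup {n | ∃ t, t <:+: v ∧ n = PL t}

/-- `(I, J, W, Z, D)` is the run factorization `factrz(w,u)` of `w`:
`(I k, J k)` enumerates the `u`-runs in increasing order, `W k` is the inter-run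
factor, and `w[I k, J k] = (Z k)^(D k)`. -/
structure IsFactrz (γ : ℕ) (w : ℕ → α) (u : List α)
    (I J : ℕ → ℕ) (W Z : ℕ → List α) (D : ℕ → ℚ) : Prop where
  run : ∀ k, 1 ≤ k → IsRun γ w u (I k) (J k)
  mono : ∀ k, 1 ≤ k → I k < I (k + 1)
  complete : ∀ i j, IsRun γ w u i j → ∃ k, 1 ≤ k ∧ I k = i ∧ J k = j
  j0 : J 0 = 0
  wdef : ∀ k, 1 ≤ k → W k = Subword w (J (k - 1) + 1) (I k - 1)
  zlen : ∀ k, 1 ≤ k → (Z k).length = u.length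
  zpow : ∀ k, 1 ≤ k → IsPowFactor u (Z k)
  dge : ∀ k, 1 ≤ k → 1 ≤ D k
  zd : ∀ k, 1 ≤ k → Subword w (I k) (J k) = fracPow (Z k) (D k)

/-- Membership in `Φ_h` (with fixed parameter `γ`). -/
def InPhi (γ h : ℕ) (φ : ℚ → ℚ) : Prop :=
  ∀ q : ℚ, 1 ≤ q → ((γ : ℚ) - 2 ≤ φ q ∧ φ q < (h : ℚ) ∧ ∃ n : ℕ, q - φ q = (n : ℚ))

/-- The finite prefix `W 1 (Z 1)^(E 1) ⋯ W k (Z k)^(E k)` of the reduced word. -/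
def redPrefix (W Z : ℕ → List α) (E : ℕ → ℚ) : ℕ → List α
  | 0 => []
  | k + 1 => redPrefix W Z E k ++ W (k + 1) ++ fracPow (Z (k + 1)) (E (k + 1))

/-- `x` is the reduced word `W 1 (Z 1)^(E 1) W 2 (Z 2)^(E 2) ⋯` (1-indexed). -/
def IsReduce (W Z : ℕ → List α) (E : ℕ → ℚ) (x : ℕ → α) : Prop :=
  ∀ k, redPrefix W Z E k = (List.range (redPrefix W Z E k).length).map fun n => x (1 + n)

/-- Position `i` of `w` is not covered by any `u`-run. -/
def RpoDom (γ : ℕ) (w : ℕ → α) (u : List α) (i : ℕ) : Prop :=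
  1 ≤ i ∧ ∀ a b, IsRun γ w u a b → ¬ (a ≤ i ∧ i ≤ b)

/-- `κ(j) = Σ_{i ≤ j} (|W i| + |(Z i)^(D i)|)`, the end position of the `j`-th run. -/
def kappa (W Z : ℕ → List α) (D : ℕ → ℚ) (j : ℕ) : ℕ :=
  ∑ i ∈ Finset.Icc 1 j, ((W i).length + (fracPow (Z i) (D i)).length)

/-- The graph of the position bijection `rpo`: position `i` of `w` (with exponent
sequence `D`) corresponds to position `ib` of the reduced word (exponents `E`). -/
def RpoRel (W Z : ℕ → List α) (D E : ℕ → ℚ) (i ib : ℕ) : Prop :=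
  ∃ j, kappa W Z D j < i ∧ i ≤ kappa W Z D (j + 1) ∧
    ib = kappa W Z E j + (i - kappa W Z D j)

/-- There are at most `N` `u`-runs entirely contained in `[a,b]`. -/
def RunCountLe (γ : ℕ) (w : ℕ → α) (u : List α) (a b N : ℕ) : Prop :=
  ∀ S : Finset (ℕ × ℕ), (∀ p ∈ S, IsRun γ w u p.1 p.2 ∧ a ≤ p.1 ∧ p.2 ≤ b) → S.card ≤ N

/-- `(i,j)` is a standard palindrome of `w` with respect to `u`. -/
def IsStdPal (γ : ℕ) (w : ℕ → α) (u : List α) (i j : ℕ) : Prop :=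
  i ≤ j ∧ RpoDom γ w u i ∧ RpoDom γ w u j ∧
  (Subword w (i - 1) (j + 1)).reverse = Subword w (i - 1) (j + 1) ∧
  (∀ m, i - 1 ≤ m → m ≤ min (i + u.length - 1) j → RpoDom γ w u m) ∧
  (∀ m, max (j + 1 - u.length) i ≤ m → m ≤ j + 1 → RpoDom γ w u m) ∧
  (∀ m, i ≤ m → m ≤ j → (RpoDom γ w u m ↔ RpoDom γ w u (i + j - m)))

/-- `(m1,m2)` is a centered standard palindrome of `w[i,j]`. -/
def IsCnStdPal (γ : ℕ) (w : ℕ → α) (u : List α) (i j m1 m2 : ℕ) : Prop :=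
  IsStdPal γ w u m1 m2 ∧ i ≤ m1 ∧ m2 ≤ j ∧ m1 - i = j - m2

theorem length_fracPow {u : List α} {q : ℚ} (hq : 0 ≤ q) :
    (fracPow u q).length = ⌊q * u.length⌋₊ := by
  have hlow : ⌊q⌋₊ * u.length ≤ ⌊q * u.length⌋₊ :=
    Nat.le_floor (by push_cast; gcongr; exact Nat.floor_le hq)
  have hup : ⌊q * u.length⌋₊ ≤ (⌊q⌋₊ + 1) * u.length :=
    Nat.floor_le_of_le (by push_cast; gcongr; exact (Nat.lt_floor_add_one q).le)
  simp only [fracPow, Int.floor_toNat, List.length_append, List.length_flatten, List.map_replicate,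
    List.sum_replicate, smul_eq_mul, List.length_take]
  rw [Nat.add_one_mul] at hup
  omega

theorem fracPow_natCast_add (u : List α) (k : ℕ) {p : ℚ} (hp : 0 ≤ p) :
    fracPow u (k + p) = (List.replicate k u).flatten ++ fracPow u p := by
  have hfloor : ⌊((k : ℚ) + p) * u.length⌋₊ = k * u.length + ⌊p * u.length⌋₊ := by
    rw [add_mul, add_comm, ← Nat.cast_mul, Nat.floor_add_natCast (by positivity), add_comm]
  have hfloor_k : ⌊(k : ℚ) + p⌋₊ = k + ⌊p⌋₊ := by
    rw [add_comm, Nat.floor_add_natCast hp, add_comm]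
  simp only [fracPow, Int.floor_toNat]
  rw [hfloor, hfloor_k, add_mul, Nat.add_sub_add_left, List.replicate_add, List.flatten_append,
    List.append_assoc]

theorem fracPow_prefix_natCast_add (u : List α) (k : ℕ) {p : ℚ} (hp : 0 ≤ p) :
    fracPow u p <+: fracPow u (k + p) := by
  -- `u^k u^⌊p⌋ = u^⌊p⌋ u^k`, and the fractional tail of `u^p` is a prefix of `u`.
  rw [fracPow_natCast_add u k hp, fracPow, ← List.append_assoc, ← List.flatten_append,
    ← List.replicate_add, add_comm, List.replicate_add, List.flatten_append, List.append_assoc]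
  refine List.prefix_append_right_inj _ |>.mpr ?_
  cases k with
  | zero => simp
  | succ k =>
    rw [List.replicate_succ, List.flatten_cons, List.append_assoc]
    exact (List.take_prefix _ u).trans (List.prefix_append _ _)

theorem fracPow_reverse_of_reduce_general {α : Type*} (φ : ℚ → ℚ)
    (hφ : ∀ q : ℚ, 1 ≤ q → (1 ≤ φ q ∧ ∃ n : ℕ, q - φ q = (n : ℚ)))
    (t v : List α) (hlen : v.length = t.length)
    (q : ℚ) (hq : 1 ≤ q)
    (hrev : fracPow v q = (fracPow t q).reverse) :
    fracPow v (φ q) = (fracPow t (φ q)).reverse := by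
  obtain ⟨hφ1, k, hk⟩ := hφ q hq
  generalize φ q = p at hφ1 hk ⊢
  obtain rfl : q = k + p := by linarith
  have hp : 0 ≤ p := by linarith
  have hlen_p : (fracPow t p).reverse.length = (fracPow v p).length := by
    rw [List.length_reverse, length_fracPow hp, length_fracPow hp, hlen]
  calc fracPow v p = (fracPow v (k + p)).take (fracPow v p).length :=
        List.prefix_iff_eq_take.mp (fracPow_prefix_natCast_add v k hp)
    _ = (fracPow t p).reverse := by
        rw [hrev, fracPow_natCast_add t k hp, List.reverse_append, List.take_left' hlen_p]

/-- exponent reduction preserves the reverse relation. -/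
theorem fracPow_reverse_of_reduce {α : Type*} (φ : ℚ → ℚ)
    (hφ : ∀ q : ℚ, 1 ≤ q → (1 ≤ φ q ∧ ∃ n : ℕ, q - φ q = (n : ℚ)))
    (t v : List α) (ht : t ≠ []) (hv : v ≠ []) (hlen : v.length = t.length)
    (q : ℚ) (hq : 1 ≤ q) (hint : ∃ m : ℤ, q * (t.length : ℚ) = (m : ℚ))
    (hrev : fracPow v q = (fracPow t q).reverse) :
    fracPow v (φ q) = (fracPow t (φ q)).reverse :=
  fracPow_reverse_of_reduce_general φ hφ t v hlen q hq hrev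
end

section
/- Let w be an infinite word, u a primitive nonempty factor, and suppose (i1,j1) and (i2,j2) are both u-runs of w with i1 < i2. Then j1 + |u| + 1 < i2; i.e., distinct runs are separated by more than |u|+1 positions and in particular do not overlap. -/
open scoped BigOperators

variable {α : Type*}

/-!
The window `w[i - |u|, j + |u|]` of a `u`-run is a factor of `u^∞` or `(u^R)^∞` that cannot be
extended by one letter on either side. Suppose `i₁ < i₂ ≤ j₁ + |u| + 1`. If `j₂ ≤ j₁`, the window
of the second run extended one letter to the left still lies inside the window of the first run.
If `j₂ > j₁`, the window of the second run covers `[j₁ + 1, j₁ + |u| + 1]`, so its period `|u|`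
gives `w (j₁ + |u| + 1) = w (j₁ + 1)`, and the window of the first run extends one letter to the
right. Both contradict maximality.
-/

open List

namespace List

theorem getElem?_flatten_replicate {v : List α} (hv : v ≠ []) :
    ∀ {k p : ℕ}, p < k * v.length → (replicate k v).flatten[p]? = v[p % v.length]?
  | 0, _, hp => by simp at hp
  | k + 1, p, hp => by
    rw [replicate_succ, flatten_cons, getElem?_append]
    split_ifs with h
    · rw [Nat.mod_eq_of_lt h]
    · rw [getElem?_flatten_replicate hv (by rw [Nat.succ_mul] at hp; omega),
        ← Nat.mod_eq_sub_mod (by omega)]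

end List

def IsFactorOfPow (v t : List α) : Prop :=
  ∃ k, t <:+: (replicate k v).flatten

theorem isFactorOfPow_iff {v t : List α} (hv : v ≠ []) :
    IsFactorOfPow v t ↔ ∃ s, ∀ n (h : n < t.length), v[(s + n) % v.length]? = some t[n] := by
  have hL : 0 < v.length := length_pos_iff.mpr hv
  constructor
  · rintro ⟨k, hk⟩
    obtain ⟨s, hs, ht⟩ := infix_iff_getElem?.mp hk
    refine ⟨s, fun n hn => ?_⟩
    rw [← ht n hn, getElem?_flatten_replicate hv (by simpa using hs.trans_lt' (by omega)),
      Nat.add_comm]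
  · rintro ⟨s, hs⟩
    have hk := Nat.le_mul_of_pos_right (s % v.length + t.length + 1) hL
    refine ⟨s % v.length + t.length + 1, infix_iff_getElem?.mpr ⟨s % v.length, ?_, fun n hn => ?_⟩⟩
    · simp only [length_flatten, map_replicate, sum_replicate, smul_eq_mul]
      omega
    · rw [getElem?_flatten_replicate hv (by omega), ← hs n hn, Nat.add_mod_mod, Nat.add_comm]

theorem IsFactorOfPow.of_infix {v t t' : List α} (ht : t' <:+: t) :
    IsFactorOfPow v t → IsFactorOfPow v t'
  | ⟨k, hk⟩ => ⟨k, ht.trans hk⟩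

theorem isPowFactor_iff {u t : List α} :
    IsPowFactor u t ↔ IsFactorOfPow u t ∨ IsFactorOfPow u.reverse t :=
  Iff.rfl

theorem IsPowFactor.of_infix {u t t' : List α} (ht : t' <:+: t) :
    IsPowFactor u t → IsPowFactor u t' :=
  Or.imp (IsFactorOfPow.of_infix ht) (IsFactorOfPow.of_infix ht)

section Subword

variable (w : ℕ → α)

@[simp]
theorem length_subword (a b : ℕ) : (Subword w a b).length = b + 1 - a := by
  simp [Subword]

@[simp]
theorem getElem_subword {a b n : ℕ} (h : n < (Subword w a b).length) :
    (Subword w a b)[n] = w (a + n) := by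
  simp [Subword]

variable {w} {v : List α} {a b : ℕ}

theorem isFactorOfPow_subword_iff (hv : v ≠ []) :
    IsFactorOfPow v (Subword w a b) ↔
      ∃ s, ∀ n, a ≤ n → n ≤ b → v[(s + n) % v.length]? = some (w n) := by
  rw [isFactorOfPow_iff hv]
  constructor
  · rintro ⟨s, hs⟩
    have ha : a ≤ v.length * a := Nat.le_mul_of_pos_left a (length_pos_iff.mpr hv)
    refine ⟨s + v.length * a - a, fun n han hnb => ?_⟩
    have := hs (n - a) (by simp; omega)
    rw [getElem_subword, Nat.add_sub_cancel' han] at this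
    rwa [show s + v.length * a - a + n = s + (n - a) + v.length * a by omega,
      Nat.add_mul_mod_self_left]
  · rintro ⟨s, hs⟩
    refine ⟨s + a, fun n hn => ?_⟩
    rw [length_subword] at hn
    rw [getElem_subword, ← hs (a + n) (by omega) (by omega), Nat.add_assoc]

theorem IsFactorOfPow.apply_add_length (hv : v ≠ []) (h : IsFactorOfPow v (Subword w a b))
    {n : ℕ} (ha : a ≤ n) (hb : n + v.length ≤ b) : w (n + v.length) = w n := by
  obtain ⟨s, hs⟩ := (isFactorOfPow_subword_iff hv).mp h
  have hper := hs (n + v.length) (by omega) hb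
  rw [← Nat.add_assoc, Nat.add_mod_right, hs n ha (by omega)] at hper
  exact (Option.some_injective _ hper).symm

theorem IsFactorOfPow.subword_succ (hv : v ≠ []) (h : IsFactorOfPow v (Subword w a b))
    (hab : a + v.length ≤ b + 1) (hper : w (b + 1) = w (b + 1 - v.length)) :
    IsFactorOfPow v (Subword w a (b + 1)) := by
  have hL : 0 < v.length := length_pos_iff.mpr hv
  obtain ⟨s, hs⟩ := (isFactorOfPow_subword_iff hv).mp h
  refine (isFactorOfPow_subword_iff hv).mpr ⟨s, fun n ha hb => ?_⟩
  obtain hb | rfl := hb.lt_or_eq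
  · exact hs n ha (by omega)
  · rw [hper, ← hs (b + 1 - v.length) (by omega) (by omega),
      show s + (b + 1) = s + (b + 1 - v.length) + v.length by omega, Nat.add_mod_right]

variable {u : List α}

theorem IsPowFactor.apply_add_length (hu : u ≠ []) (h : IsPowFactor u (Subword w a b))
    {n : ℕ} (ha : a ≤ n) (hb : n + u.length ≤ b) : w (n + u.length) = w n := by
  rcases isPowFactor_iff.mp h with h | h
  · exact h.apply_add_length hu ha hb
  · simpa using h.apply_add_length (reverse_ne_nil_iff.mpr hu) ha (by simpa using hb)

theorem IsPowFactor.subword_succ (hu : u ≠ []) (h : IsPowFactor u (Subword w a b))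
    (hab : a + u.length ≤ b + 1) (hper : w (b + 1) = w (b + 1 - u.length)) :
    IsPowFactor u (Subword w a (b + 1)) := by
  rcases isPowFactor_iff.mp h with h | h
  · exact Or.inl (h.subword_succ hu hab hper)
  · exact Or.inr (h.subword_succ (reverse_ne_nil_iff.mpr hu) (by simpa using hab)
      (by simpa using hper))

theorem subword_infix_subword {a' b' : ℕ} (ha : a ≤ a') (hb : b' ≤ b) :
    Subword w a' b' <:+: Subword w a b := by
  refine infix_iff_getElem?.mpr ⟨min (a' - a) (b + 1 - a), by simp; omega, fun n hn => ?_⟩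
  rw [length_subword] at hn
  rw [getElem?_eq_getElem (by simp; omega), getElem_subword, getElem_subword]
  congr 2
  omega

end Subword

theorem runs_separated_general {α : Type*} (γ : ℕ) (w : ℕ → α) (u : List α)
    (hu : u ≠ [])
    (i1 j1 i2 j2 : ℕ) (h1 : IsRun γ w u i1 j1) (h2 : IsRun γ w u i2 j2)
    (hlt : i1 < i2) : j1 + u.length + 1 < i2 := by
  obtain ⟨-, -, -, hwin1, -, hright1⟩ := h1
  obtain ⟨-, -, -, hwin2, hleft2, -⟩ := h2
  by_contra! hclose
  rcases le_or_gt j2 j1 with hj | hj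
  · exact hleft2 (hwin1.of_infix (subword_infix_subword (by omega) (by omega)))
  · have hper : w (j1 + u.length + 1) = w (j1 + u.length + 1 - u.length) := by
      rw [Nat.add_right_comm, Nat.add_sub_cancel]
      exact hwin2.apply_add_length hu (by omega) (by omega)
    exact hright1 (hwin1.subword_succ hu (by omega) hper)

/-- distinct runs are separated by more than `|u|+1` positions. -/
theorem runs_separated {α : Type*} (γ : ℕ) (hγ : 3 ≤ γ) (w : ℕ → α) (u : List α)
    (hu : u ≠ []) (hprim : Primitive u) (hfac : IsFactorI w u)
    (i1 j1 i2 j2 : ℕ) (h1 : IsRun γ w u i1 j1) (h2 : IsRun γ w u i2 j2)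
    (hlt : i1 < i2) : j1 + u.length + 1 < i2 :=
  runs_separated_general γ w u hu i1 j1 i2 j2 h1 h2 hlt
end

section
/- Let φ: ℕ≥1 → ℝ be a strictly increasing function with φ(n) → ∞. Then there exists an infinite non-ultimately-periodic binary word w such that limsup_{n→∞} PPL_w(n)/φ(n) ≤ 1, where PPL_w(n) is the palindromic length of the prefix of w of length n. In particular, the word w = 0^{⌈φ⁻¹(2)⌉} 1 0^{⌈φ⁻¹(4)⌉} 1 0^{⌈φ⁻¹(6)⌉} 1 ⋯ has this property. -/
open scoped BigOperators

variable {α : Type*}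

/-!
Take for `w` the indicator word of `Set.range b`, where `b` is strictly increasing, the gaps
`b (k + 1) - b k` tend to infinity, and `φ (b k) ≥ 2k + 3`. Unbounded gaps between the ones
rule out periodicity. A word with `j` ones is a product of at most `2j + 1` palindromes
(the blocks of zeros and the single ones), and the prefix of length `n`, with
`b k ≤ n < b (k + 1)`, has at most `k + 1` ones; hence its palindromic length is at most
`2k + 3 ≤ φ (b k) ≤ φ n`.
-/

open Filter

theorem PL_le_length {v : List α} {ps : List (List α)} (hv : ps.flatten = v)
    (hps : ∀ p ∈ ps, p ≠ [] ∧ p.reverse = p) : PL v ≤ ps.length :=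
  Nat.sInf_le ⟨ps, hv, rfl, hps⟩

theorem exists_palindromic_factorization (v : List α) :
    ∃ ps : List (List α), ps.flatten = v ∧ ps.length = PL v ∧
      ∀ p ∈ ps, p ≠ [] ∧ p.reverse = p :=
  Nat.sInf_mem (s := {k | ∃ ps : List (List α), ps.flatten = v ∧ ps.length = k ∧
    ∀ p ∈ ps, p ≠ [] ∧ p.reverse = p})
    ⟨_, v.map ([·]), by simp [← List.flatMap_def], rfl, by simp⟩

theorem PL_append_le (u v : List α) : PL (u ++ v) ≤ PL u + PL v := by
  obtain ⟨ps, rfl, hps, hpal⟩ := exists_palindromic_factorization u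
  obtain ⟨qs, rfl, hqs, hqal⟩ := exists_palindromic_factorization v
  calc PL (ps.flatten ++ qs.flatten) ≤ (ps ++ qs).length :=
        PL_le_length (by simp) fun p hp => (List.mem_append.1 hp).elim (hpal p) (hqal p)
    _ = PL ps.flatten + PL qs.flatten := by rw [List.length_append, hps, hqs]

theorem PL_le_one {v : List α} (hv : v.reverse = v) : PL v ≤ 1 := by
  rcases eq_or_ne v [] with rfl | hne
  · exact (PL_le_length (ps := []) rfl (by simp)).trans zero_le_one
  · exact PL_le_length (ps := [v]) (by simp) (by simpa using ⟨hne, hv⟩)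

theorem PL_replicate_append_le [DecidableEq α] (c : α) (m : ℕ) (v : List α) :
    PL (List.replicate m c ++ v) ≤ 2 * v.countP (· ≠ c) + 1 := by
  induction v generalizing m with
  | nil => simpa using PL_le_one List.reverse_replicate
  | cons x v ih =>
    by_cases hx : x = c
    · subst hx
      simpa [List.replicate_succ'] using ih (m + 1)
    · calc PL (List.replicate m c ++ x :: v)
            ≤ PL (List.replicate m c) + (PL [x] + PL (List.replicate 0 c ++ v)) := by
            refine (PL_append_le _ _).trans (Nat.add_le_add_left ?_ _)
            simpa using PL_append_le [x] v
        _ ≤ 1 + (1 + (2 * v.countP (· ≠ c) + 1)) := by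
            gcongr
            exacts [PL_le_one List.reverse_replicate, PL_le_one rfl, ih 0]
        _ = 2 * (x :: v).countP (· ≠ c) + 1 := by
            simp [hx]; ring

theorem PL_le_two_mul_countP_add_one [DecidableEq α] (c : α) (v : List α) :
    PL v ≤ 2 * v.countP (· ≠ c) + 1 := by
  simpa using PL_replicate_append_le c 0 v

theorem StrictMono.notMem_range_of_lt_of_lt {b : ℕ → ℕ} (hb : StrictMono b) {k m : ℕ}
    (h₁ : b k < m) (h₂ : m < b (k + 1)) : m ∉ Set.range b := by
  rintro ⟨j, rfl⟩
  have := hb.lt_iff_lt.1 h₁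
  have := hb.lt_iff_lt.1 h₂
  omega

theorem not_ultimatelyPeriodic_indicator_range {M : Type*} [Zero M] [One M] [NeZero (1 : M)]
    {b : ℕ → ℕ} (hb : StrictMono b) (hgap : Tendsto (fun k => b (k + 1) - b k) atTop atTop) :
    ¬ UltimatelyPeriodic ((Set.range b).indicator (1 : ℕ → M)) := by
  rintro ⟨p, N, hp, hper⟩
  obtain ⟨k, hkN, hk⟩ :=
    ((eventually_ge_atTop N).and (hgap.eventually_gt_atTop p)).exists
  have hone : (Set.range b).indicator (1 : ℕ → M) (b k) = 1 :=
    Set.indicator_of_mem (Set.mem_range_self k) _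
  have hzero : (Set.range b).indicator (1 : ℕ → M) (b k + p) = 0 :=
    Set.indicator_of_notMem (hb.notMem_range_of_lt_of_lt (k := k) (by omega) (by omega)) _
  have := hper (b k) (hkN.trans (hb.id_le k))
  rw [hone, hzero] at this
  exact zero_ne_one this

theorem countP_ne_zero_map_le {M : Type*} [Zero M] [DecidableEq M] {b : ℕ → ℕ}
    (hb : StrictMono b) {w : ℕ → M} (hw : ∀ m, w m ≠ 0 → m ∈ Set.range b)
    {l : List ℕ} (hl : l.Nodup) {k : ℕ}
    (hlt : ∀ m ∈ l, m < b k) : (l.map w).countP (· ≠ 0) ≤ k := by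
  have hsub : l.filter (w · ≠ 0) ⊆ (List.range k).map b := by
    intro m hm
    simp only [List.mem_filter, decide_eq_true_eq] at hm
    obtain ⟨j, rfl⟩ := hw m hm.2
    exact List.mem_map_of_mem (List.mem_range.2 (hb.lt_iff_lt.1 (hlt _ hm.1)))
  rw [List.countP_map, List.countP_eq_length_filter]
  simpa [Function.comp_def] using (List.subperm_of_subset (hl.filter _) hsub).length_le

theorem PL_prefix_le_of_support_subset_range {M : Type*} [Zero M] [DecidableEq M]
    {b : ℕ → ℕ} (hb : StrictMono b) {w : ℕ → M} (hw : ∀ m, w m ≠ 0 → m ∈ Set.range b)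
    {k n : ℕ} (hn : n < b (k + 1)) :
    PL ((List.range n).map fun i => w (1 + i)) ≤ 2 * k + 3 := by
  have hcount : ((List.range' 1 n).map w).countP (· ≠ 0) ≤ k + 1 :=
    countP_ne_zero_map_le hb hw List.nodup_range' fun m hm => by
      rw [List.mem_range'_1] at hm
      omega
  calc PL ((List.range n).map fun i => w (1 + i))
      ≤ 2 * ((List.range' 1 n).map w).countP (· ≠ 0) + 1 := by
        rw [List.range'_eq_map_range, List.map_map]
        exact PL_le_two_mul_countP_add_one 0 _
    _ ≤ 2 * k + 3 := by omega

theorem exists_strictMono_ge_with_unbounded_gaps (a : ℕ → ℕ) :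
    ∃ b : ℕ → ℕ, StrictMono b ∧ (∀ k, a k ≤ b k) ∧
      Tendsto (fun k => b (k + 1) - b k) atTop atTop := by
  refine ⟨fun k => ∑ j ∈ Finset.range (k + 1), (a j + j), ?_, fun k => ?_, ?_⟩
  · refine strictMono_nat_of_lt_succ fun k => ?_
    rw [Finset.sum_range_succ _ (k + 1)]
    omega
  · dsimp only
    rw [Finset.sum_range_succ]
    omega
  · refine tendsto_atTop_mono (fun k => ?_) tendsto_id
    simp only [Finset.sum_range_succ _ (k + 1), id]
    omega

/-- palindromic length of prefixes can grow arbitrarily slowly for a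
non-ultimately periodic binary word. -/
theorem slow_prefix_palindromic_length (φ : ℕ → ℝ) (hmono : StrictMono φ)
    (htop : Filter.Tendsto φ Filter.atTop Filter.atTop) :
    ∃ w : ℕ → Fin 2, ¬ UltimatelyPeriodic w ∧
      Filter.limsup
        (fun n => (PL ((List.range n).map fun i => w (1 + i)) : ℝ) / φ n)
        Filter.atTop ≤ 1 := by
  choose a ha using fun k : ℕ => (htop.eventually_ge_atTop (2 * k + 3 : ℝ)).exists
  obtain ⟨b, hb, hab, hgap⟩ := exists_strictMono_ge_with_unbounded_gaps a
  set w : ℕ → Fin 2 := (Set.range b).indicator 1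
  have hw : ∀ m, w m ≠ 0 → m ∈ Set.range b := fun m => Set.mem_of_indicator_ne_zero
  refine ⟨w, not_ultimatelyPeriodic_indicator_range hb hgap, ?_⟩
  have hPL : ∀ᶠ n in atTop, (PL ((List.range n).map fun i => w (1 + i)) : ℝ) ≤ φ n := by
    filter_upwards [eventually_ge_atTop (b 0)] with n hn
    obtain ⟨k, hkn, hnk⟩ := hb.exists_between_of_tendsto_atTop hb.tendsto_atTop
      (Nat.lt_succ_of_le hn)
    calc (PL ((List.range n).map fun i => w (1 + i)) : ℝ)
        ≤ 2 * k + 3 := by exact_mod_cast PL_prefix_le_of_support_subset_range hb hw hnk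
      _ ≤ φ (a k) := ha k
      _ ≤ φ n := hmono.monotone ((hab k).trans (Nat.le_of_lt_succ hkn))
  refine limsup_le_of_le (isCoboundedUnder_le_of_eventually_le _ (x := 0) ?_) ?_
  · filter_upwards [htop.eventually_ge_atTop 0] with n hn using div_nonneg (by positivity) hn
  · filter_upwards [hPL, htop.eventually_gt_atTop 0] with n hn hpos
    exact (div_le_one hpos).2 hn
end
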